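/- Let (M,g) be a Riemannian manifold with a unit Killing field Y, and let u be smooth. With Δ̄ the Laplacian of ḡ = g + tY⊗Y, we have the comparison: Δ̄u = Δu - (t/(1+t))·Hess u(Y,Y), where Hess u is the Hessian of u with respect to g. -/

import Mathlib

open scoped BigOperators

/-- Partial derivative `∂ᵢ f` of a function on `ℝⁿ` (local coordinates on a chart). -/
noncomputable def pd {n : ℕ} (i : Fin n) (f : (Fin n → ℝ) → ℝ) (x : Fin n → ℝ) : ℝ :=
  fderiv ℝ f x (Pi.single i 1)

/-- Christoffel symbols `Γ^k_{ij} = ½ g^{kl}(∂ᵢg_{jl} + ∂ⱼg_{il} - ∂ₗg_{ij})` of the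
Levi-Civita connection of a metric `g`, in local coordinates. -/
noncomputable def christoffel {n : ℕ} (g : (Fin n → ℝ) → Matrix (Fin n) (Fin n) ℝ)
    (x : Fin n → ℝ) (k i j : Fin n) : ℝ :=
  (1 / 2) * ∑ l, (g x)⁻¹ k l *
    (pd i (fun y => g y j l) x + pd j (fun y => g y i l) x - pd l (fun y => g y i j) x)

/-- Covariant Hessian `∇ᵢ∇ⱼ u = ∂ᵢ∂ⱼu - Γ^k_{ij}∂ₖu` of a function. -/
noncomputable def hess {n : ℕ} (g : (Fin n → ℝ) → Matrix (Fin n) (Fin n) ℝ)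
    (u : (Fin n → ℝ) → ℝ) (x : Fin n → ℝ) (i j : Fin n) : ℝ :=
  pd i (fun y => pd j u y) x - ∑ k, christoffel g x k i j * pd k u x

/-- Laplace–Beltrami operator `Δu = g^{ij}∇ᵢ∇ⱼu`. -/
noncomputable def laplacian {n : ℕ} (g : (Fin n → ℝ) → Matrix (Fin n) (Fin n) ℝ)
    (u : (Fin n → ℝ) → ℝ) (x : Fin n → ℝ) : ℝ :=
  ∑ i, ∑ j, (g x)⁻¹ i j * hess g u x i j

/-- Covariant derivative `∇ᵢYⱼ = ∂ᵢYⱼ - Γ^k_{ij}Yₖ` of the 1-form `Yⱼ = g_{jk}Y^k`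
associated to a vector field `Y`. -/
noncomputable def covDerivLow {n : ℕ} (g : (Fin n → ℝ) → Matrix (Fin n) (Fin n) ℝ)
    (Y : (Fin n → ℝ) → Fin n → ℝ) (x : Fin n → ℝ) (i j : Fin n) : ℝ :=
  pd i (fun y => ∑ k, g y j k * Y y k) x -
    ∑ k, christoffel g x k i j * (∑ m, g x k m * Y x m)


lemma pd_congr {n : ℕ} (i : Fin n) {f h : (Fin n → ℝ) → ℝ} (hfh : ∀ y, f y = h y)
    (x : Fin n → ℝ) : pd i f x = pd i h x := by
  have : f = h := funext hfh
  rw [this]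

lemma pd_const {n : ℕ} (i : Fin n) (c : ℝ) (x : Fin n → ℝ) :
    pd i (fun _ => c) x = 0 := by
  unfold pd; simp

lemma pd_add {n : ℕ} (i : Fin n) {f h : (Fin n → ℝ) → ℝ} (x : Fin n → ℝ)
    (hf : DifferentiableAt ℝ f x) (hh : DifferentiableAt ℝ h x) :
    pd i (fun y => f y + h y) x = pd i f x + pd i h x := by
  unfold pd; rw [fderiv_fun_add hf hh]; simp

lemma pd_mul {n : ℕ} (i : Fin n) {f h : (Fin n → ℝ) → ℝ} (x : Fin n → ℝ)
    (hf : DifferentiableAt ℝ f x) (hh : DifferentiableAt ℝ h x) :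
    pd i (fun y => f y * h y) x = pd i f x * h x + f x * pd i h x := by
  unfold pd; rw [fderiv_fun_mul hf hh]
  simp only [ContinuousLinearMap.add_apply, ContinuousLinearMap.smul_apply, smul_eq_mul]
  ring

lemma pd_const_mul {n : ℕ} (i : Fin n) (c : ℝ) {f : (Fin n → ℝ) → ℝ} (x : Fin n → ℝ)
    (hf : DifferentiableAt ℝ f x) :
    pd i (fun y => c * f y) x = c * pd i f x := by
  unfold pd; rw [fderiv_const_mul hf]; simp

lemma pd_sum {n : ℕ} {ι : Type*} (s : Finset ι) (i : Fin n)
    (f : ι → (Fin n → ℝ) → ℝ) (x : Fin n → ℝ)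
    (hf : ∀ a ∈ s, DifferentiableAt ℝ (f a) x) :
    pd i (fun y => ∑ a ∈ s, f a y) x = ∑ a ∈ s, pd i (f a) x := by
  unfold pd; rw [fderiv_fun_sum hf]; simp



lemma swap_contract {n : ℕ} (Gb : Matrix (Fin n) (Fin n) ℝ) (Γ : Fin n → Fin n → Fin n → ℝ)
    (p : Fin n → ℝ) :
    (∑ i, ∑ j, Gb i j * (∑ k, Γ k i j * p k)) = ∑ k, (∑ i, ∑ j, Gb i j * Γ k i j) * p k := by
  have h1 : ∀ i j, Gb i j * (∑ k, Γ k i j * p k) = ∑ k, (Gb i j * Γ k i j) * p k := by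
    intro i j; rw [Finset.mul_sum]; exact Finset.sum_congr rfl fun k _ => by ring
  rw [Finset.sum_congr rfl fun i _ => Finset.sum_congr rfl fun j _ => h1 i j]
  rw [Finset.sum_congr rfl fun i (_ : i ∈ Finset.univ) => Finset.sum_comm]
  rw [Finset.sum_comm]
  refine Finset.sum_congr rfl fun k _ => ?_
  rw [Finset.sum_mul]
  exact Finset.sum_congr rfl fun i _ => by rw [Finset.sum_mul]

lemma LAP_split {n : ℕ} (Gm : Matrix (Fin n) (Fin n) ℝ) (Γm : Fin n → Fin n → Fin n → ℝ)
    (P : Fin n → Fin n → ℝ) (p : Fin n → ℝ) :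
    (∑ i, ∑ j, Gm i j * (P i j - ∑ k, Γm k i j * p k))
      = (∑ i, ∑ j, Gm i j * P i j) - ∑ k, (∑ i, ∑ j, Gm i j * Γm k i j) * p k := by
  rw [← swap_contract Gm Γm p, ← Finset.sum_sub_distrib]
  refine Finset.sum_congr rfl fun i _ => ?_
  rw [← Finset.sum_sub_distrib]
  exact Finset.sum_congr rfl fun j _ => by ring

lemma FIN_alg {n : ℕ} (c : ℝ) (Gb Gi VV : Matrix (Fin n) (Fin n) ℝ)
    (Γb Γ : Fin n → Fin n → Fin n → ℝ) (P : Fin n → Fin n → ℝ) (p : Fin n → ℝ)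
    (hGb : ∀ i j, Gb i j = Gi i j - c * VV i j)
    (hkey : ∀ k, (∑ i, ∑ j, Gb i j * Γb k i j) = ∑ i, ∑ j, Gb i j * Γ k i j) :
    (∑ i, ∑ j, Gb i j * P i j) - (∑ k, (∑ i, ∑ j, Gb i j * Γb k i j) * p k)
      = ((∑ i, ∑ j, Gi i j * P i j) - ∑ k, (∑ i, ∑ j, Gi i j * Γ k i j) * p k)
        - c * ((∑ i, ∑ j, VV i j * P i j) - ∑ k, (∑ i, ∑ j, VV i j * Γ k i j) * p k) := by
  have hsum : ∀ (F : Fin n → Fin n → ℝ), (∑ i, ∑ j, Gb i j * F i j)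
      = (∑ i, ∑ j, Gi i j * F i j) - c * (∑ i, ∑ j, VV i j * F i j) := by
    intro F
    have h1 : ∀ i j, Gb i j * F i j = Gi i j * F i j - c * (VV i j * F i j) :=
      fun i j => by rw [hGb i j]; ring
    rw [Finset.sum_congr rfl fun i _ => Finset.sum_congr rfl fun j _ => h1 i j]
    simp only [Finset.sum_sub_distrib, ← Finset.mul_sum]
  have h0 : ∀ k, (∑ i, ∑ j, Gb i j * Γb k i j) * p k
      = ((∑ i, ∑ j, Gi i j * Γ k i j) - c * (∑ i, ∑ j, VV i j * Γ k i j)) * p k :=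
    fun k => by rw [hkey k, hsum (Γ k)]
  rw [Finset.sum_congr rfl fun k _ => h0 k, hsum P]
  have h2 : ∀ k, ((∑ i, ∑ j, Gi i j * Γ k i j) - c * (∑ i, ∑ j, VV i j * Γ k i j)) * p k
      = (∑ i, ∑ j, Gi i j * Γ k i j) * p k - c * ((∑ i, ∑ j, VV i j * Γ k i j) * p k) :=
    fun k => by ring
  rw [Finset.sum_congr rfl fun k _ => h2 k, Finset.sum_sub_distrib, ← Finset.mul_sum]
  ring

lemma contract_left {n : ℕ} (Gi : Matrix (Fin n) (Fin n) ℝ)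
    (hsym : ∀ a b, Gi a b = Gi b a) (wv v : Fin n → ℝ)
    (hGw : ∀ a, (∑ l, Gi a l * wv l) = v a) (B : Fin n → ℝ) :
    (∑ k, ((1/2) * ∑ l, Gi k l * B l) * wv k) = (1/2) * ∑ m, v m * B m := by
  have h1 : ∀ k, ((1/2 : ℝ) * ∑ l, Gi k l * B l) * wv k
      = ∑ l, (1/2) * (B l * (Gi l k * wv k)) := by
    intro k
    rw [mul_assoc, Finset.sum_mul, Finset.mul_sum]
    exact Finset.sum_congr rfl fun l _ => by rw [hsym k l]; ring
  rw [Finset.sum_congr rfl fun k _ => h1 k, Finset.sum_comm, Finset.mul_sum]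
  refine Finset.sum_congr rfl fun l _ => ?_
  rw [Finset.sum_congr rfl fun k _ => (mul_assoc ((1:ℝ)/2) (B l) (Gi l k * wv k)).symm,
      ← Finset.mul_sum, hGw l]
  ring

lemma ALG_gammabar {n : ℕ} {t : ℝ} (h1t : (1:ℝ) + t ≠ 0)
    (Gi : Matrix (Fin n) (Fin n) ℝ) (v w : Fin n → ℝ)
    (Bg : Fin n → Fin n → Fin n → ℝ) (C : Fin n → Fin n → ℝ) (GW : Fin n → Fin n → ℝ)
    (hGW : ∀ i j, GW i j = (1/2) * ∑ l, v l * Bg i j l)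
    (hGw : ∀ k, (∑ l, Gi k l * w l) = v k)
    (hvw : (∑ l, v l * w l) = 1)
    (hCv : ∀ i, (∑ l, v l * C i l) = 0)
    (k i j : Fin n) :
    (1/2) * ∑ l, (Gi k l - (t/(1+t)) * v k * v l) *
        (Bg i j l + 2*t*GW i j*w l + t*w j*C i l + t*w i*C j l)
      = (1/2) * ∑ l, Gi k l * Bg i j l
        + (t/2) * (w j * (∑ l, Gi k l * C i l) + w i * (∑ l, Gi k l * C j l)) := by
  have hexp : ∀ l : Fin n, (Gi k l - (t/(1+t)) * v k * v l) *
        (Bg i j l + 2*t*GW i j*w l + t*w j*C i l + t*w i*C j l)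
      = Gi k l * Bg i j l + (2*t*GW i j) * (Gi k l * w l)
        + (t*w j) * (Gi k l * C i l) + (t*w i) * (Gi k l * C j l)
        - ((t/(1+t)) * v k) * (v l * Bg i j l)
        - ((t/(1+t)) * v k * (2*t*GW i j)) * (v l * w l)
        - ((t/(1+t)) * v k * (t*w j)) * (v l * C i l)
        - ((t/(1+t)) * v k * (t*w i)) * (v l * C j l) := by
    intro l; ring
  rw [Finset.sum_congr rfl fun l _ => hexp l]
  simp only [Finset.sum_add_distrib, Finset.sum_sub_distrib, ← Finset.mul_sum]
  rw [hGw k, hvw, hCv i, hCv j]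
  have h2 : (∑ l, v l * Bg i j l) = 2 * GW i j := by rw [hGW i j]; ring
  rw [h2]
  field_simp
  ring

lemma ALG_contract {n : ℕ} {t : ℝ} (h1t : (1:ℝ) + t ≠ 0)
    (Gi Gb : Matrix (Fin n) (Fin n) ℝ) (v w : Fin n → ℝ) (C : Fin n → Fin n → ℝ)
    (Γ Γb : Fin n → Fin n → Fin n → ℝ)
    (hGb : ∀ a b, Gb a b = Gi a b - (t/(1+t)) * v a * v b)
    (hGisym : ∀ a b, Gi a b = Gi b a)
    (hΓb : ∀ k i j, Γb k i j = Γ k i j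
        + (t/2) * (w j * (∑ l, Gi k l * C i l) + w i * (∑ l, Gi k l * C j l)))
    (hGw : ∀ a, (∑ l, Gi a l * w l) = v a)
    (hvw : (∑ l, v l * w l) = 1)
    (hC0 : ∀ l, (∑ i, v i * C i l) = 0)
    (k : Fin n) :
    (∑ i, ∑ j, Gb i j * Γb k i j) = ∑ i, ∑ j, Gb i j * Γ k i j := by
  have hGbw : ∀ a, (∑ l, Gb a l * w l) = (1 - t/(1+t)) * v a := by
    intro a
    have h1 : ∀ l, Gb a l * w l = Gi a l * w l - ((t/(1+t)) * v a) * (v l * w l) := by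
      intro l; rw [hGb a l]; ring
    rw [Finset.sum_congr rfl fun l _ => h1 l, Finset.sum_sub_distrib, hGw a,
        ← Finset.mul_sum, hvw]
    ring
  have hGbw' : ∀ b, (∑ a, Gb a b * w a) = (1 - t/(1+t)) * v b := by
    intro b
    have h1 : ∀ a, Gb a b * w a = Gi b a * w a - ((t/(1+t)) * v b) * (v a * w a) := by
      intro a; rw [hGb a b, hGisym a b]; ring
    rw [Finset.sum_congr rfl fun a _ => h1 a, Finset.sum_sub_distrib, hGw b,
        ← Finset.mul_sum, hvw]
    ring
  have hvX : ∀ m : Fin n, (∑ i, v i * (∑ l, Gi m l * C i l)) = 0 := by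
    intro m
    have h1 : ∀ i, v i * (∑ l, Gi m l * C i l) = ∑ l, Gi m l * (v i * C i l) := by
      intro i; rw [Finset.mul_sum]; exact Finset.sum_congr rfl fun l _ => by ring
    rw [Finset.sum_congr rfl fun i _ => h1 i, Finset.sum_comm]
    refine Finset.sum_eq_zero fun l _ => ?_
    rw [← Finset.mul_sum, hC0 l, mul_zero]
  have H1 : (∑ i, ∑ j, (Gb i j * w j) * (∑ l, Gi k l * C i l)) = 0 := by
    have h1 : ∀ i, (∑ j, (Gb i j * w j) * (∑ l, Gi k l * C i l))
        = (1 - t/(1+t)) * (v i * (∑ l, Gi k l * C i l)) := by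
      intro i; rw [← Finset.sum_mul, hGbw i]; ring
    rw [Finset.sum_congr rfl fun i _ => h1 i, ← Finset.mul_sum, hvX k, mul_zero]
  have H2 : (∑ i, ∑ j, (Gb i j * w i) * (∑ l, Gi k l * C j l)) = 0 := by
    rw [Finset.sum_comm]
    have h1 : ∀ j, (∑ i, (Gb i j * w i) * (∑ l, Gi k l * C j l))
        = (1 - t/(1+t)) * (v j * (∑ l, Gi k l * C j l)) := by
      intro j; rw [← Finset.sum_mul, hGbw' j]; ring
    rw [Finset.sum_congr rfl fun j _ => h1 j, ← Finset.mul_sum, hvX k, mul_zero]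
  have hsplit : ∀ i j, Gb i j * Γb k i j
      = Gb i j * Γ k i j + (t/2) * ((Gb i j * w j) * (∑ l, Gi k l * C i l))
        + (t/2) * ((Gb i j * w i) * (∑ l, Gi k l * C j l)) := by
    intro i j; rw [hΓb k i j]; ring
  rw [Finset.sum_congr rfl fun i _ => Finset.sum_congr rfl fun j _ => hsplit i j]
  simp only [Finset.sum_add_distrib, ← Finset.mul_sum]
  rw [H1, H2]
  ring


lemma ALG_C0 {n : ℕ}
    (G : Matrix (Fin n) (Fin n) ℝ) (D : Fin n → Fin n → Fin n → ℝ)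
    (E : Fin n → Fin n → ℝ) (v : Fin n → ℝ) (S GW : Fin n → Fin n → ℝ)
    (hS : ∀ i j, S i j = (∑ k, D i j k * v k) + (∑ k, G j k * E i k))
    (hKill : ∀ i j, S i j + S j i = 2 * GW i j)
    (hGW : ∀ i j, GW i j = (1/2) * ∑ m, v m * (D i j m + D j i m - D m i j))
    (hDsym : ∀ a b c, D a b c = D a c b)
    (hGsym : ∀ a b, G a b = G b a)
    (hUnit : ∀ l, ((∑ i, ∑ j, D l i j * v i * v j)
        + 2 * (∑ i, ∑ j, G i j * v i * E l j)) = 0)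
    (l : Fin n) : (∑ i, v i * (S i l - S l i)) = 0 := by
  have hSl : (∑ i, v i * S l i)
      = (∑ i, ∑ j, D l i j * v i * v j) + (∑ i, ∑ j, G i j * v i * E l j) := by
    have h1 : ∀ i, v i * S l i
        = (∑ j, D l i j * v i * v j) + (∑ j, G i j * v i * E l j) := by
      intro i
      rw [hS l i, mul_add, Finset.mul_sum, Finset.mul_sum]
      congr 1
      · exact Finset.sum_congr rfl fun j _ => by ring
      · exact Finset.sum_congr rfl fun j _ => by ring
    rw [Finset.sum_congr rfl fun i _ => h1 i, Finset.sum_add_distrib]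
  have hGWl : (∑ i, v i * GW i l) = -(∑ i, ∑ j, G i j * v i * E l j) := by
    have h1 : ∀ i, v i * GW i l
        = (∑ m, (1/2) * (v i * (v m * D i l m)))
          + (∑ m, (1/2) * (D l i m * v i * v m))
          - (∑ m, (1/2) * (v i * (v m * D m i l))) := by
      intro i
      rw [hGW i l, Finset.mul_sum, Finset.mul_sum,
          ← Finset.sum_add_distrib, ← Finset.sum_sub_distrib]
      exact Finset.sum_congr rfl fun m _ => by ring
    rw [Finset.sum_congr rfl fun i _ => h1 i, Finset.sum_sub_distrib, Finset.sum_add_distrib]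
    have hA13 : (∑ i, ∑ m, (1/2 : ℝ) * (v i * (v m * D m i l)))
        = ∑ i, ∑ m, (1/2) * (v i * (v m * D i l m)) := by
      rw [Finset.sum_comm]
      exact Finset.sum_congr rfl fun a _ => Finset.sum_congr rfl fun b _ => by
        rw [hDsym a b l]; ring
    have hA2 : (∑ i, ∑ m, (1/2 : ℝ) * (D l i m * v i * v m))
        = (1/2) * ∑ i, ∑ m, D l i m * v i * v m := by
      rw [Finset.mul_sum]
      exact Finset.sum_congr rfl fun i _ => by rw [Finset.mul_sum]
    have hU := hUnit l
    linarith [hA13, hA2, hU]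
  have h2 : ∀ i, v i * S i l = 2 * (v i * GW i l) - v i * S l i := by
    intro i; linear_combination v i * hKill i l
  calc (∑ i, v i * (S i l - S l i))
      = ∑ i, (2 * (v i * GW i l) - v i * S l i - v i * S l i) := by
        refine Finset.sum_congr rfl fun i _ => ?_
        linear_combination v i * hKill i l
    _ = 2 * (∑ i, v i * GW i l) - (∑ i, v i * S l i) - (∑ i, v i * S l i) := by
        rw [Finset.sum_sub_distrib, Finset.sum_sub_distrib, ← Finset.mul_sum]
    _ = 0 := by
        have hU := hUnit l
        rw [hGWl, hSl]; linarith

lemma inv_mulvec {n : ℕ} (A : Matrix (Fin n) (Fin n) ℝ) (hA : A.PosDef) (v : Fin n → ℝ)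
    (a : Fin n) : (∑ l, A⁻¹ a l * (∑ k, A l k * v k)) = v a := by
  have hdet : IsUnit A.det := hA.det_pos.ne'.isUnit
  have hAiA : ∀ b c, (∑ l, A⁻¹ b l * A l c) = if b = c then 1 else 0 := by
    intro b c
    have h2 := congrFun (congrFun (Matrix.nonsing_inv_mul A hdet) b) c
    simpa [Matrix.mul_apply, Matrix.one_apply] using h2
  have h1 : ∀ l, A⁻¹ a l * (∑ k, A l k * v k) = ∑ k, (A⁻¹ a l * A l k) * v k := by
    intro l; rw [Finset.mul_sum]; exact Finset.sum_congr rfl fun k _ => by ring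
  rw [Finset.sum_congr rfl fun l _ => h1 l, Finset.sum_comm]
  have h2 : ∀ kk, (∑ l, (A⁻¹ a l * A l kk) * v kk) = (if a = kk then 1 else 0) * v kk := by
    intro kk; rw [← Finset.sum_mul, hAiA a kk]
  rw [Finset.sum_congr rfl fun kk _ => h2 kk]
  simp

lemma gbar_inv {n : ℕ} {t : ℝ} (h1t : (1:ℝ) + t ≠ 0)
    (A B : Matrix (Fin n) (Fin n) ℝ) (hA : A.PosDef) (v : Fin n → ℝ)
    (hv : (∑ i, ∑ j, A i j * v i * v j) = 1)
    (hB : ∀ i j, B i j = A i j + t * (∑ k, A i k * v k) * (∑ k, A j k * v k)) :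
    ∀ i j, B⁻¹ i j = A⁻¹ i j - (t/(1+t)) * v i * v j := by
  have hdet : IsUnit A.det := hA.det_pos.ne'.isUnit
  have hAisym : ∀ a b, A⁻¹ a b = A⁻¹ b a := by
    intro a b
    have hh := congrFun (congrFun hA.isHermitian.inv a) b
    simpa [Matrix.conjTranspose_apply] using hh.symm
  have hAAi : ∀ a b, (∑ l, A a l * A⁻¹ l b) = if a = b then 1 else 0 := by
    intro a b
    have h2 := congrFun (congrFun (Matrix.mul_nonsing_inv A hdet) a) b
    simpa [Matrix.mul_apply, Matrix.one_apply] using h2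
  have hw2 : ∀ b, (∑ l, A⁻¹ l b * (∑ k, A l k * v k)) = v b := by
    intro b
    rw [Finset.sum_congr rfl fun l (_ : l ∈ Finset.univ) => by rw [hAisym l b]]
    exact inv_mulvec A hA v b
  have hwv : (∑ l, (∑ k, A l k * v k) * v l) = 1 := by
    have h1 : ∀ l, (∑ k, A l k * v k) * v l = ∑ k, A l k * v l * v k := by
      intro l; rw [Finset.sum_mul]; exact Finset.sum_congr rfl fun k _ => by ring
    rw [Finset.sum_congr rfl fun l _ => h1 l]
    exact hv
  have key : B * Matrix.of (fun a b => A⁻¹ a b - (t/(1+t)) * v a * v b) = 1 := by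
    ext a b
    rw [Matrix.mul_apply]
    have h1 : ∀ l, B a l * (Matrix.of (fun a b => A⁻¹ a b - (t/(1+t)) * v a * v b)) l b
        = A a l * A⁻¹ l b
          - ((t/(1+t)) * v b) * (A a l * v l)
          + (t * (∑ k, A a k * v k)) * (A⁻¹ l b * (∑ k, A l k * v k))
          - (t * (t/(1+t)) * (∑ k, A a k * v k) * v b) * ((∑ k, A l k * v k) * v l) := by
      intro l
      rw [hB a l]
      simp only [Matrix.of_apply]
      ring
    rw [Finset.sum_congr rfl fun l _ => h1 l]
    simp only [Finset.sum_add_distrib, Finset.sum_sub_distrib, ← Finset.mul_sum]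
    rw [hAAi a b, hw2 b, hwv]
    rw [Matrix.one_apply]
    field_simp
    ring
  have hBi : B⁻¹ = Matrix.of (fun a b => A⁻¹ a b - (t/(1+t)) * v a * v b) :=
    Matrix.inv_eq_right_inv key
  intro i j
  rw [hBi]
  rfl


/-- (Main Lemma of the paper, with `|Y| = 1`.)  Let `(M,g)` be a
Riemannian manifold (in local coordinates: smooth positive-definite `g` on `ℝⁿ`) with a
unit-length Killing field `Y`, and let `u` be smooth.  For `t > -1`, the Laplacian `Δ̄` of
the deformed metric `ḡᵢⱼ = gᵢⱼ + tYᵢYⱼ` satisfies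
`Δ̄u = Δu - (t/(1+t))·Y^iY^j∇ᵢ∇ⱼu = Δu - (t/(1+t))·Hess u(Y,Y)`. -/
theorem stmt15 {n : ℕ} (g : (Fin n → ℝ) → Matrix (Fin n) (Fin n) ℝ)
    (Y : (Fin n → ℝ) → Fin n → ℝ) (u : (Fin n → ℝ) → ℝ) (t : ℝ) (ht : -1 < t)
    (hgsmooth : ∀ i j, ContDiff ℝ (⊤ : ℕ∞) (fun y => g y i j))
    (hYsmooth : ∀ i, ContDiff ℝ (⊤ : ℕ∞) (fun y => Y y i))
    (husmooth : ContDiff ℝ (⊤ : ℕ∞) u)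
    (hgpos : ∀ x, (g x).PosDef)
    (hKilling : ∀ x i j, covDerivLow g Y x i j + covDerivLow g Y x j i = 0)
    (hunit : ∀ x, ∑ i, ∑ j, g x i j * Y x i * Y x j = 1)
    (gbar : (Fin n → ℝ) → Matrix (Fin n) (Fin n) ℝ)
    (hgbar : ∀ x i j, gbar x i j =
      g x i j + t * (∑ k, g x i k * Y x k) * (∑ k, g x j k * Y x k)) :
    ∀ x, laplacian gbar u x =
      laplacian g u x - (t / (1 + t)) * ∑ i, ∑ j, Y x i * Y x j * hess g u x i j := by
  intro x
  have h1t : (1:ℝ) + t ≠ 0 := by linarith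
  -- differentiability facts
  have hgd : ∀ (i j : Fin n) (y : Fin n → ℝ), DifferentiableAt ℝ (fun z => g z i j) y :=
    fun i j y => ((hgsmooth i j).differentiable (by simp)).differentiableAt
  have hYd : ∀ (i : Fin n) (y : Fin n → ℝ), DifferentiableAt ℝ (fun z => Y z i) y :=
    fun i y => ((hYsmooth i).differentiable (by simp)).differentiableAt
  have hwd : ∀ (b : Fin n) (y : Fin n → ℝ),
      DifferentiableAt ℝ (fun z => ∑ k, g z b k * Y z k) y :=
    fun b y => DifferentiableAt.fun_sum fun k _ => (hgd b k y).mul (hYd k y)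
  -- symmetry facts
  have hgsym : ∀ (y : Fin n → ℝ) (a b : Fin n), g y a b = g y b a := by
    intro y a b
    have hh := congrFun (congrFun ((hgpos y).isHermitian) a) b
    simpa [Matrix.conjTranspose_apply] using hh.symm
  have hGisym : ∀ a b, (g x)⁻¹ a b = (g x)⁻¹ b a := by
    intro a b
    have hh := congrFun (congrFun ((hgpos x).isHermitian.inv) a) b
    simpa [Matrix.conjTranspose_apply] using hh.symm
  have hDsym : ∀ a b c, pd a (fun y => g y b c) x = pd a (fun y => g y c b) x :=
    fun a b c => pd_congr a (fun y => hgsym y b c) x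
  have hΓsym : ∀ k i j, christoffel g x k i j = christoffel g x k j i := by
    intro k i j
    unfold christoffel
    congr 1
    refine Finset.sum_congr rfl fun l _ => ?_
    rw [hDsym l i j]
    ring
  -- matrix facts
  have hGw : ∀ a, (∑ l, (g x)⁻¹ a l * (∑ k, g x l k * Y x k)) = Y x a :=
    fun a => inv_mulvec (g x) (hgpos x) (Y x) a
  have hvw : (∑ l, Y x l * (∑ k, g x l k * Y x k)) = 1 := by
    have h1 : ∀ l, Y x l * (∑ k, g x l k * Y x k) = ∑ k, g x l k * Y x l * Y x k := by
      intro l; rw [Finset.mul_sum]; exact Finset.sum_congr rfl fun k _ => by ring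
    rw [Finset.sum_congr rfl fun l _ => h1 l]
    exact hunit x
  have hGbInv : ∀ a b, (gbar x)⁻¹ a b = (g x)⁻¹ a b - (t/(1+t)) * Y x a * Y x b :=
    gbar_inv h1t (g x) (gbar x) (hgpos x) (Y x) (hunit x) (fun i j => hgbar x i j)
  have hGbInv2 : ∀ a b, (gbar x)⁻¹ a b = (g x)⁻¹ a b - (t/(1+t)) * (Y x a * Y x b) :=
    fun a b => by rw [hGbInv a b]; ring
  -- Killing equation in coordinates
  have hKillx : ∀ i j, pd i (fun y => ∑ k, g y j k * Y y k) x
      + pd j (fun y => ∑ k, g y i k * Y y k) x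
      = 2 * ∑ k, christoffel g x k i j * (∑ m, g x k m * Y x m) := by
    intro i j
    have h0 := hKilling x i j
    unfold covDerivLow at h0
    have h1 : (∑ k, christoffel g x k j i * (∑ m, g x k m * Y x m))
        = ∑ k, christoffel g x k i j * (∑ m, g x k m * Y x m) :=
      Finset.sum_congr rfl fun k _ => by rw [hΓsym k j i]
    rw [h1] at h0
    linarith
  -- contraction of christoffel with Y (lowered)
  have hGWeq : ∀ i j, (∑ k, christoffel g x k i j * (∑ m, g x k m * Y x m))
      = (1/2) * ∑ m, Y x m * (pd i (fun y => g y j m) x + pd j (fun y => g y i m) x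
          - pd m (fun y => g y i j) x) := by
    intro i j
    unfold christoffel
    exact contract_left (g x)⁻¹ hGisym (fun a => ∑ m, g x a m * Y x m) (Y x) hGw
      (fun l => pd i (fun y => g y j l) x + pd j (fun y => g y i l) x
        - pd l (fun y => g y i j) x)
  have hKill2 : ∀ i j, pd i (fun y => ∑ k, g y j k * Y y k) x
      + pd j (fun y => ∑ k, g y i k * Y y k) x
      = 2 * ((1/2) * ∑ m, Y x m * (pd i (fun y => g y j m) x + pd j (fun y => g y i m) x
          - pd m (fun y => g y i j) x)) := by
    intro i j
    rw [← hGWeq i j]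
    exact hKillx i j
  -- derivative of the unit condition
  have hUnitD : ∀ l, ((∑ i, ∑ j, pd l (fun y => g y i j) x * Y x i * Y x j)
      + 2 * (∑ i, ∑ j, g x i j * Y x i * pd l (fun y => Y y j) x)) = 0 := by
    intro l
    have hd1 : ∀ (i j : Fin n) (y : Fin n → ℝ),
        DifferentiableAt ℝ (fun z => g z i j * Y z i) y :=
      fun i j y => (hgd i j y).mul (hYd i y)
    have hd2 : ∀ (i j : Fin n) (y : Fin n → ℝ),
        DifferentiableAt ℝ (fun z => g z i j * Y z i * Y z j) y :=
      fun i j y => (hd1 i j y).mul (hYd j y)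
    have hd3 : ∀ (i : Fin n) (y : Fin n → ℝ),
        DifferentiableAt ℝ (fun z => ∑ j, g z i j * Y z i * Y z j) y :=
      fun i y => DifferentiableAt.fun_sum fun j _ => hd2 i j y
    have h0 : pd l (fun y => ∑ i, ∑ j, g y i j * Y y i * Y y j) x = 0 :=
      (pd_congr l hunit x).trans (pd_const l 1 x)
    have e1 : pd l (fun y => ∑ i, ∑ j, g y i j * Y y i * Y y j) x
        = ∑ i, pd l (fun y => ∑ j, g y i j * Y y i * Y y j) x :=
      pd_sum Finset.univ l (fun i => fun y => ∑ j, g y i j * Y y i * Y y j) x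
        (fun i _ => hd3 i x)
    have e2 : ∀ i, pd l (fun y => ∑ j, g y i j * Y y i * Y y j) x
        = ∑ j, pd l (fun y => g y i j * Y y i * Y y j) x :=
      fun i => pd_sum Finset.univ l (fun j => fun y => g y i j * Y y i * Y y j) x
        (fun j _ => hd2 i j x)
    have e3 : ∀ i j, pd l (fun y => g y i j * Y y i * Y y j) x
        = pd l (fun y => g y i j * Y y i) x * Y x j
          + (g x i j * Y x i) * pd l (fun y => Y y j) x :=
      fun i j => pd_mul l x (hd1 i j x) (hYd j x)
    have e4 : ∀ i j, pd l (fun y => g y i j * Y y i) x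
        = pd l (fun y => g y i j) x * Y x i + g x i j * pd l (fun y => Y y i) x :=
      fun i j => pd_mul l x (hgd i j x) (hYd i x)
    have h5 : (∑ i, ∑ j, ((pd l (fun y => g y i j) x * Y x i
          + g x i j * pd l (fun y => Y y i) x) * Y x j
          + (g x i j * Y x i) * pd l (fun y => Y y j) x)) = 0 := by
      rw [← Finset.sum_congr rfl fun i (_ : i ∈ Finset.univ) =>
        Finset.sum_congr rfl fun j (_ : j ∈ Finset.univ) => by rw [← e4 i j, ← e3 i j]]
      rw [← Finset.sum_congr rfl fun i (_ : i ∈ Finset.univ) => e2 i, ← e1]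
      exact h0
    have h3 : (∑ i, ∑ j, (g x i j * pd l (fun y => Y y i) x) * Y x j)
        = ∑ i, ∑ j, g x i j * Y x i * pd l (fun y => Y y j) x := by
      rw [Finset.sum_comm]
      exact Finset.sum_congr rfl fun a _ => Finset.sum_congr rfl fun b _ => by
        rw [hgsym x b a]; ring
    have h4 : (∑ i, ∑ j, ((pd l (fun y => g y i j) x * Y x i
          + g x i j * pd l (fun y => Y y i) x) * Y x j
          + (g x i j * Y x i) * pd l (fun y => Y y j) x))
        = (∑ i, ∑ j, pd l (fun y => g y i j) x * Y x i * Y x j)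
          + ((∑ i, ∑ j, (g x i j * pd l (fun y => Y y i) x) * Y x j)
          + (∑ i, ∑ j, g x i j * Y x i * pd l (fun y => Y y j) x)) := by
      have e : ∀ i j, ((pd l (fun y => g y i j) x * Y x i
            + g x i j * pd l (fun y => Y y i) x) * Y x j
            + (g x i j * Y x i) * pd l (fun y => Y y j) x)
          = (pd l (fun y => g y i j) x * Y x i * Y x j)
            + ((g x i j * pd l (fun y => Y y i) x) * Y x j
            + g x i j * Y x i * pd l (fun y => Y y j) x) := fun i j => by ring
      rw [Finset.sum_congr rfl fun i (_ : i ∈ Finset.univ) =>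
        Finset.sum_congr rfl fun j (_ : j ∈ Finset.univ) => e i j]
      simp only [Finset.sum_add_distrib]
    rw [h4, h3] at h5
    linarith [h5]
  -- expansion of S (first derivative of lowered Y)
  have hSexp : ∀ i j, pd i (fun y => ∑ k, g y j k * Y y k) x
      = (∑ k, pd i (fun y => g y j k) x * Y x k)
        + (∑ k, g x j k * pd i (fun y => Y y k) x) := by
    intro i j
    have e1 : pd i (fun y => ∑ k, g y j k * Y y k) x
        = ∑ k, pd i (fun y => g y j k * Y y k) x :=
      pd_sum Finset.univ i (fun k => fun y => g y j k * Y y k) x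
        (fun k _ => (hgd j k x).mul (hYd k x))
    have e2 : ∀ k, pd i (fun y => g y j k * Y y k) x
        = pd i (fun y => g y j k) x * Y x k + g x j k * pd i (fun y => Y y k) x :=
      fun k => pd_mul i x (hgd j k x) (hYd k x)
    rw [e1, Finset.sum_congr rfl fun k (_ : k ∈ Finset.univ) => e2 k,
        Finset.sum_add_distrib]
  -- the key antisymmetric contraction vanishes
  have hC0 : ∀ l, (∑ i, Y x i * (pd i (fun y => ∑ k, g y l k * Y y k) x
      - pd l (fun y => ∑ k, g y i k * Y y k) x)) = 0 :=
    ALG_C0 (g x) (fun a b c => pd a (fun y => g y b c) x)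
      (fun a b => pd a (fun y => Y y b) x) (Y x)
      (fun a b => pd a (fun y => ∑ k, g y b k * Y y k) x)
      (fun i j => (1/2) * ∑ m, Y x m * (pd i (fun y => g y j m) x
        + pd j (fun y => g y i m) x - pd m (fun y => g y i j) x))
      hSexp hKill2 (fun i j => rfl) hDsym (hgsym x) hUnitD
  have hCv : ∀ i, (∑ l, Y x l * (pd i (fun y => ∑ k, g y l k * Y y k) x
      - pd l (fun y => ∑ k, g y i k * Y y k) x)) = 0 := by
    intro i
    have h1 : ∀ l, Y x l * (pd i (fun y => ∑ k, g y l k * Y y k) x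
        - pd l (fun y => ∑ k, g y i k * Y y k) x)
        = -(Y x l * (pd l (fun y => ∑ k, g y i k * Y y k) x
          - pd i (fun y => ∑ k, g y l k * Y y k) x)) := fun l => by ring
    rw [Finset.sum_congr rfl fun l (_ : l ∈ Finset.univ) => h1 l,
        Finset.sum_neg_distrib, hC0 i, neg_zero]
  -- derivative of gbar entries
  have hpdgbar : ∀ a b c, pd a (fun y => gbar y b c) x
      = pd a (fun y => g y b c) x
        + t * (pd a (fun y => ∑ k, g y b k * Y y k) x * (∑ k, g x c k * Y x k)
          + (∑ k, g x b k * Y x k) * pd a (fun y => ∑ k, g y c k * Y y k) x) := by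
    intro a b c
    have e0 : pd a (fun y => gbar y b c) x
        = pd a (fun y => g y b c
            + t * ((∑ k, g y b k * Y y k) * (∑ k, g y c k * Y y k))) x :=
      pd_congr a (fun y => by rw [hgbar y b c]; ring) x
    have e1 : pd a (fun y => g y b c
          + t * ((∑ k, g y b k * Y y k) * (∑ k, g y c k * Y y k))) x
        = pd a (fun y => g y b c) x
          + pd a (fun y => t * ((∑ k, g y b k * Y y k) * (∑ k, g y c k * Y y k))) x :=
      pd_add a x (hgd b c x) (((hwd b x).mul (hwd c x)).const_mul t)
    have e2 : pd a (fun y => t * ((∑ k, g y b k * Y y k) * (∑ k, g y c k * Y y k))) x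
        = t * pd a (fun y => (∑ k, g y b k * Y y k) * (∑ k, g y c k * Y y k)) x :=
      pd_const_mul a t x ((hwd b x).mul (hwd c x))
    have e3 : pd a (fun y => (∑ k, g y b k * Y y k) * (∑ k, g y c k * Y y k)) x
        = pd a (fun y => ∑ k, g y b k * Y y k) x * (∑ k, g x c k * Y x k)
          + (∑ k, g x b k * Y x k) * pd a (fun y => ∑ k, g y c k * Y y k) x :=
      pd_mul a x (hwd b x) (hwd c x)
    rw [e0, e1, e2, e3]
  -- formula for the deformed christoffel symbols
  have hΓbar : ∀ k i j, christoffel gbar x k i j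
      = christoffel g x k i j
        + (t/2) * ((∑ k', g x j k' * Y x k')
            * (∑ l, (g x)⁻¹ k l * (pd i (fun y => ∑ m, g y l m * Y y m) x
                - pd l (fun y => ∑ m, g y i m * Y y m) x))
          + (∑ k', g x i k' * Y x k')
            * (∑ l, (g x)⁻¹ k l * (pd j (fun y => ∑ m, g y l m * Y y m) x
                - pd l (fun y => ∑ m, g y j m * Y y m) x))) := by
    intro k i j
    have hsummand : ∀ l, (gbar x)⁻¹ k l
        * (pd i (fun y => gbar y j l) x + pd j (fun y => gbar y i l) x
            - pd l (fun y => gbar y i j) x)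
        = ((g x)⁻¹ k l - (t/(1+t)) * Y x k * Y x l)
          * ((pd i (fun y => g y j l) x + pd j (fun y => g y i l) x
              - pd l (fun y => g y i j) x)
            + 2*t*((1/2) * ∑ m, Y x m * (pd i (fun y => g y j m) x
                + pd j (fun y => g y i m) x - pd m (fun y => g y i j) x))
              * (∑ k', g x l k' * Y x k')
            + t*(∑ k', g x j k' * Y x k')*(pd i (fun y => ∑ m, g y l m * Y y m) x
                - pd l (fun y => ∑ m, g y i m * Y y m) x)
            + t*(∑ k', g x i k' * Y x k')*(pd j (fun y => ∑ m, g y l m * Y y m) x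
                - pd l (fun y => ∑ m, g y j m * Y y m) x)) := by
      intro l
      rw [hGbInv k l, hpdgbar i j l, hpdgbar j i l, hpdgbar l i j]
      linear_combination (((g x)⁻¹ k l - (t/(1+t)) * Y x k * Y x l) * t
        * (∑ k', g x l k' * Y x k')) * hKill2 i j
    unfold christoffel
    rw [Finset.sum_congr rfl fun l (_ : l ∈ Finset.univ) => hsummand l]
    exact ALG_gammabar h1t ((g x)⁻¹) (Y x) (fun a => ∑ k', g x a k' * Y x k')
      (fun i j l => pd i (fun y => g y j l) x + pd j (fun y => g y i l) x
        - pd l (fun y => g y i j) x)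
      (fun a b => pd a (fun y => ∑ m, g y b m * Y y m) x
        - pd b (fun y => ∑ m, g y a m * Y y m) x)
      (fun i j => (1/2) * ∑ m, Y x m * (pd i (fun y => g y j m) x
        + pd j (fun y => g y i m) x - pd m (fun y => g y i j) x))
      (fun i j => rfl) hGw hvw hCv k i j
  -- the contracted christoffels agree
  have key : ∀ kk, (∑ i, ∑ j, (gbar x)⁻¹ i j * christoffel gbar x kk i j)
      = ∑ i, ∑ j, (gbar x)⁻¹ i j * christoffel g x kk i j :=
    fun kk => ALG_contract h1t ((g x)⁻¹) ((gbar x)⁻¹) (Y x)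
      (fun a => ∑ k', g x a k' * Y x k')
      (fun a b => pd a (fun y => ∑ m, g y b m * Y y m) x
        - pd b (fun y => ∑ m, g y a m * Y y m) x)
      (christoffel g x) (christoffel gbar x)
      hGbInv hGisym hΓbar hGw hvw hC0 kk
  -- final assembly
  unfold laplacian hess
  have e1 : (∑ i, ∑ j, (gbar x)⁻¹ i j * (pd i (fun y => pd j u y) x
        - ∑ k, christoffel gbar x k i j * pd k u x))
      = (∑ i, ∑ j, (gbar x)⁻¹ i j * pd i (fun y => pd j u y) x)
        - ∑ k, (∑ i, ∑ j, (gbar x)⁻¹ i j * christoffel gbar x k i j) * pd k u x :=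
    LAP_split ((gbar x)⁻¹) (christoffel gbar x)
      (fun a b => pd a (fun y => pd b u y) x) (fun kk => pd kk u x)
  have e2 : (∑ i, ∑ j, (g x)⁻¹ i j * (pd i (fun y => pd j u y) x
        - ∑ k, christoffel g x k i j * pd k u x))
      = (∑ i, ∑ j, (g x)⁻¹ i j * pd i (fun y => pd j u y) x)
        - ∑ k, (∑ i, ∑ j, (g x)⁻¹ i j * christoffel g x k i j) * pd k u x :=
    LAP_split ((g x)⁻¹) (christoffel g x)
      (fun a b => pd a (fun y => pd b u y) x) (fun kk => pd kk u x)
  have e3 : (∑ i, ∑ j, Y x i * Y x j * (pd i (fun y => pd j u y) x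
        - ∑ k, christoffel g x k i j * pd k u x))
      = (∑ i, ∑ j, Y x i * Y x j * pd i (fun y => pd j u y) x)
        - ∑ k, (∑ i, ∑ j, Y x i * Y x j * christoffel g x k i j) * pd k u x :=
    LAP_split (fun a b => Y x a * Y x b) (christoffel g x)
      (fun a b => pd a (fun y => pd b u y) x) (fun kk => pd kk u x)
  rw [e1, e2, e3]
  exact FIN_alg (t/(1+t)) ((gbar x)⁻¹) ((g x)⁻¹) (fun a b => Y x a * Y x b)
    (christoffel gbar x) (christoffel g x)
    (fun a b => pd a (fun y => pd b u y) x) (fun kk => pd kk u x)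
    hGbInv2 key
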